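/- If some security k ∈ K is accessible to exactly two traders (|I_k| = 2), then there exists no fixed point (X*_i)_{i∈I} of the system X*_i = (B_i^{-H_i} + π_i (X*_{-i})⁻¹ π_i)^{-H_i} with each X*_i strictly positive definite on H_i; i.e., no Nash equilibrium in negative demand slopes exists. -/

import Mathlib

/-!
At a fixed point `X i = π A⁻¹ π` with `A = B_i^{-H_i} + π X_{-i}⁻¹ π + π^⊥`, where `π` projects
onto `H_i`. Because `B_i^{-H_i}` is strictly positive on `H_i`, `A` strictly dominates
`π X_{-i}⁻¹ π`, and inverting (via `v ⬝ A⁻¹ v = max_u (2 v ⬝ u - u ⬝ A u)`) gives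
`X i ≺ X_{-i}` on `H_i`; in particular `X i k k < X_{-i} k k` whenever `k ∈ H_i`.
If only `i` and `j` trade `k`, every other slope vanishes at `(k, k)`, so `X_{-i} k k = X j k k`
and `X_{-j} k k = X i k k`, which contradicts the two strict inequalities.
-/

open Matrix BigOperators Filter Topology

/-- Orthogonal projection onto the coordinate subspace determined by `S`. -/
noncomputable def proj (K : Type*) [Fintype K] [DecidableEq K] (S : Finset K) :
    Matrix K K ℝ :=
  Matrix.diagonal (fun k => if k ∈ S then (1 : ℝ) else 0)

/-- `B ∈ S_≻^{H}` : symmetric nonnegative definite, vanishing on vectors orthogonal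
to the coordinate subspace `H` given by `S`, and strictly positive definite on `H`. -/
def SPDOn {K : Type*} [Fintype K] [DecidableEq K] (S : Finset K) (B : Matrix K K ℝ) : Prop :=
  B.PosSemidef ∧
  (∀ x : K → ℝ, (∀ j, j ∉ S → x j = 0) → x ≠ 0 → 0 < x ⬝ᵥ (B *ᵥ x)) ∧
  (∀ x : K → ℝ, (∀ j, j ∈ S → x j = 0) → B *ᵥ x = 0)

/-- The inverse of `B` computed on the coordinate subspace given by `S`, extended by zero
(`B^{-H}` in the paper). -/
noncomputable def invOn {K : Type*} [Fintype K] [DecidableEq K] (S : Finset K)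
    (B : Matrix K K ℝ) : Matrix K K ℝ :=
  proj K S * (B + proj K Sᶜ)⁻¹ * proj K S

/-- `A ≺_{H} B` : the difference `B - A` belongs to `S_≻^{H}`. -/
def ltOn {K : Type*} [Fintype K] [DecidableEq K] (S : Finset K) (A B : Matrix K K ℝ) : Prop :=
  SPDOn S (B - A)

/-- The best-response map `F_i(X) = (B_i^{-H_i} + π_i (X_{-i})⁻¹ π_i)^{-H_i}`. -/
noncomputable def Fmap {I K : Type*} [Fintype I] [DecidableEq I] [Fintype K] [DecidableEq K]
    (Ki : I → Finset K) (B : I → Matrix K K ℝ) (X : I → Matrix K K ℝ) (i : I) :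
    Matrix K K ℝ :=
  invOn (Ki i) (invOn (Ki i) (B i) +
    proj K (Ki i) * (∑ j ∈ Finset.univ.erase i, X j)⁻¹ * proj K (Ki i))

namespace Matrix

variable {n : Type*} [Fintype n]

lemma IsSymm.dotProduct_mulVec_comm {R : Type*} [CommSemiring R] {P : Matrix n n R}
    (hP : P.IsSymm) (x y : n → R) : x ⬝ᵥ (P *ᵥ y) = (P *ᵥ x) ⬝ᵥ y := by
  rw [dotProduct_mulVec, ← mulVec_transpose, hP.eq]

lemma IsSymm.dotProduct_mul_mul_mulVec {R : Type*} [CommSemiring R] {P : Matrix n n R}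
    (hP : P.IsSymm) (M : Matrix n n R) (x y : n → R) :
    x ⬝ᵥ ((P * M * P) *ᵥ y) = (P *ᵥ x) ⬝ᵥ (M *ᵥ (P *ᵥ y)) := by
  rw [← mulVec_mulVec, ← mulVec_mulVec, hP.dotProduct_mulVec_comm]

variable [DecidableEq n]

lemma apply_self_eq_dotProduct_mulVec {R : Type*} [NonAssocSemiring R] (M : Matrix n n R)
    (k : n) : M k k = Pi.single k 1 ⬝ᵥ (M *ᵥ Pi.single k 1) := by
  simp [single_dotProduct]

/-- The easy half of the variational formula `v ⬝ M⁻¹ v = max_u (2 v ⬝ u - u ⬝ M u)`. -/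
lemma PosDef.two_mul_dotProduct_sub_le {M : Matrix n n ℝ} (hM : M.PosDef) (v u : n → ℝ) :
    2 * (v ⬝ᵥ u) - u ⬝ᵥ (M *ᵥ u) ≤ v ⬝ᵥ (M⁻¹ *ᵥ v) := by
  set w := M⁻¹ *ᵥ v
  have hMw : M *ᵥ w = v := by
    rw [mulVec_mulVec, mul_nonsing_inv _ ((isUnit_iff_isUnit_det _).mp hM.isUnit), one_mulVec]
  have hsymm := (isHermitian_iff_isSymm.mp hM.isHermitian).dotProduct_mulVec_comm w u
  have hsq : 0 ≤ (u - w) ⬝ᵥ (M *ᵥ (u - w)) := by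
    simpa using hM.posSemidef.dotProduct_mulVec_nonneg (u - w)
  simp only [mulVec_sub, dotProduct_sub, sub_dotProduct, hMw] at hsq hsymm
  linarith [dotProduct_comm u v, dotProduct_comm w v]

/-- Strict antitonicity of inversion in the Loewner order, compressed by a symmetric `P`:
`A ≻ P Y⁻¹ P` off `ker P` gives `A⁻¹ ≺ Y` on the fixed vectors of `P`. -/
lemma PosDef.dotProduct_inv_mulVec_lt {A Y P : Matrix n n ℝ} (hA : A.PosDef) (hY : Y.PosDef)
    (hP : P.IsSymm)
    (hgap : ∀ x, P *ᵥ x ≠ 0 → (P *ᵥ x) ⬝ᵥ (Y⁻¹ *ᵥ (P *ᵥ x)) < x ⬝ᵥ (A *ᵥ x))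
    {v : n → ℝ} (hPv : P *ᵥ v = v) (hv : v ≠ 0) :
    v ⬝ᵥ (A⁻¹ *ᵥ v) < v ⬝ᵥ (Y *ᵥ v) := by
  set w := A⁻¹ *ᵥ v
  have hAw : A *ᵥ w = v := by
    rw [mulVec_mulVec, mul_nonsing_inv _ ((isUnit_iff_isUnit_det _).mp hA.isUnit), one_mulVec]
  have hquad : v ⬝ᵥ w = w ⬝ᵥ (A *ᵥ w) := by rw [hAw, dotProduct_comm]
  have hproj : v ⬝ᵥ (P *ᵥ w) = v ⬝ᵥ w := by rw [hP.dotProduct_mulVec_comm, hPv]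
  have hPw : P *ᵥ w ≠ 0 := by
    intro h0
    have hw : w ≠ 0 := fun hw0 => hv (by rw [← hAw, hw0, mulVec_zero])
    have hpos : 0 < w ⬝ᵥ (A *ᵥ w) := by simpa using hA.dotProduct_mulVec_pos hw
    rw [← hquad, ← hproj, h0, dotProduct_zero] at hpos
    exact hpos.false
  have hvar := hY.inv.two_mul_dotProduct_sub_le v (P *ᵥ w)
  rw [nonsing_inv_nonsing_inv _ ((isUnit_iff_isUnit_det _).mp hY.isUnit)] at hvar
  linarith [hgap w hPw]

end Matrix

section Proj

variable {K : Type*} [Fintype K] [DecidableEq K]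

lemma proj_mulVec_apply (S : Finset K) (x : K → ℝ) (l : K) :
    (proj K S *ᵥ x) l = if l ∈ S then x l else 0 := by
  simp [proj, mulVec_diagonal]

lemma isSymm_proj (S : Finset K) : (proj K S).IsSymm := isSymm_diagonal _

lemma posSemidef_proj (S : Finset K) : (proj K S).PosSemidef :=
  .diagonal fun l => by dsimp only; split_ifs <;> norm_num

lemma proj_add_proj_compl (S : Finset K) : proj K S + proj K Sᶜ = 1 := by
  rw [proj, proj, diagonal_add, ← diagonal_one]
  congr 1
  ext l
  by_cases hl : l ∈ S <;> simp [hl]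

lemma proj_mulVec_eq_self {S : Finset K} {x : K → ℝ} (hx : ∀ l, l ∉ S → x l = 0) :
    proj K S *ᵥ x = x := by
  ext l
  rw [proj_mulVec_apply]
  split_ifs with hl
  · rfl
  · exact (hx l hl).symm

lemma proj_mulVec_eq_zero {S : Finset K} {x : K → ℝ} (hx : ∀ l, l ∈ S → x l = 0) :
    proj K S *ᵥ x = 0 := by
  ext l
  rw [proj_mulVec_apply]
  split_ifs with hl
  · exact hx l hl
  · rfl

lemma dotProduct_proj_compl_mulVec_pos {S : Finset K} {x : K → ℝ} (hx : x ≠ 0)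
    (hSx : proj K S *ᵥ x = 0) : 0 < x ⬝ᵥ (proj K Sᶜ *ᵥ x) := by
  have hcompl : proj K Sᶜ *ᵥ x = x := by
    rw [← zero_add (proj K Sᶜ *ᵥ x), ← hSx, ← add_mulVec, proj_add_proj_compl, one_mulVec]
  rw [hcompl]
  simpa using dotProduct_self_star_pos_iff.mpr hx

end Proj

namespace SPDOn

variable {K : Type*} [Fintype K] [DecidableEq K] {S : Finset K} {B : Matrix K K ℝ}

lemma isSymm (hB : SPDOn S B) : B.IsSymm := isHermitian_iff_isSymm.mp hB.1.isHermitian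

lemma mulVec_proj_mulVec (hB : SPDOn S B) (x : K → ℝ) : B *ᵥ (proj K S *ᵥ x) = B *ᵥ x := by
  have hker : B *ᵥ (x - proj K S *ᵥ x) = 0 :=
    hB.2.2 _ fun l hl => by simp [proj_mulVec_apply, hl]
  rwa [mulVec_sub, sub_eq_zero, eq_comm] at hker

lemma dotProduct_mulVec_proj (hB : SPDOn S B) (x : K → ℝ) :
    x ⬝ᵥ (B *ᵥ x) = (proj K S *ᵥ x) ⬝ᵥ (B *ᵥ (proj K S *ᵥ x)) := by
  calc x ⬝ᵥ (B *ᵥ x) = x ⬝ᵥ (B *ᵥ (proj K S *ᵥ x)) := by rw [hB.mulVec_proj_mulVec]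
    _ = (B *ᵥ x) ⬝ᵥ (proj K S *ᵥ x) := hB.isSymm.dotProduct_mulVec_comm _ _
    _ = (proj K S *ᵥ x) ⬝ᵥ (B *ᵥ (proj K S *ᵥ x)) := by
        rw [← hB.mulVec_proj_mulVec x, dotProduct_comm]

lemma dotProduct_mulVec_pos (hB : SPDOn S B) {x : K → ℝ} (hx : proj K S *ᵥ x ≠ 0) :
    0 < x ⬝ᵥ (B *ᵥ x) := by
  rw [hB.dotProduct_mulVec_proj]
  exact hB.2.1 _ (fun l hl => by simp [proj_mulVec_apply, hl]) hx

lemma apply_eq_zero_of_notMem (hB : SPDOn S B) {k : K} (hk : k ∉ S) (l : K) : B l k = 0 := by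
  have hcol := congrFun (hB.2.2 (Pi.single k 1) fun m hm => by
    rw [Pi.single_apply, if_neg (ne_of_mem_of_not_mem hm hk)]) l
  simpa using hcol

lemma posDef_add_proj_compl (hB : SPDOn S B) : (B + proj K Sᶜ).PosDef := by
  refine .of_dotProduct_mulVec_pos (hB.1.isHermitian.add (posSemidef_proj _).isHermitian)
    fun x hx => ?_
  simp only [star_trivial, add_mulVec, dotProduct_add]
  by_cases hSx : proj K S *ᵥ x = 0
  · have hBx : 0 ≤ x ⬝ᵥ (B *ᵥ x) := by simpa using hB.1.dotProduct_mulVec_nonneg x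
    linarith [dotProduct_proj_compl_mulVec_pos hx hSx]
  · have hproj : 0 ≤ x ⬝ᵥ (proj K Sᶜ *ᵥ x) := by
      simpa using (posSemidef_proj Sᶜ).dotProduct_mulVec_nonneg x
    linarith [hB.dotProduct_mulVec_pos hSx]

lemma of_posDef_sandwich {N : Matrix K K ℝ} (hN : N.PosDef) :
    SPDOn S (proj K S * N * proj K S) := by
  refine ⟨?_, fun x hx hx0 => ?_, fun x hx => ?_⟩
  · simpa [(isSymm_proj S).eq] using hN.posSemidef.conjTranspose_mul_mul_same (proj K S)
  · rw [(isSymm_proj S).dotProduct_mul_mul_mulVec, proj_mulVec_eq_self hx]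
    simpa using hN.dotProduct_mulVec_pos hx0
  · rw [← mulVec_mulVec, proj_mulVec_eq_zero hx, mulVec_zero]

lemma invOn (hB : SPDOn S B) : SPDOn S (invOn S B) :=
  of_posDef_sandwich hB.posDef_add_proj_compl.inv

lemma add_sandwich (hB : SPDOn S B) {M : Matrix K K ℝ} (hM : M.PosSemidef) :
    SPDOn S (B + proj K S * M * proj K S) := by
  refine ⟨?_, fun x hx hx0 => ?_, fun x hx => ?_⟩
  · refine hB.1.add ?_
    simpa [(isSymm_proj S).eq] using hM.conjTranspose_mul_mul_same (proj K S)
  · rw [add_mulVec, dotProduct_add, (isSymm_proj S).dotProduct_mul_mul_mulVec]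
    have hpos := hB.2.1 x hx hx0
    have hnn : 0 ≤ (proj K S *ᵥ x) ⬝ᵥ (M *ᵥ (proj K S *ᵥ x)) := by
      simpa using hM.dotProduct_mulVec_nonneg (proj K S *ᵥ x)
    linarith
  · rw [add_mulVec, hB.2.2 x hx, ← mulVec_mulVec, proj_mulVec_eq_zero hx, mulVec_zero, add_zero]

end SPDOn

section Market

variable {I K : Type*} [Fintype K] [DecidableEq K]

lemma posDef_sum_of_SPDOn_of_cover (s : Finset I) (Ki : I → Finset K) (X : I → Matrix K K ℝ)
    (hX : ∀ j ∈ s, SPDOn (Ki j) (X j)) (hcover : ∀ l, ∃ j ∈ s, l ∈ Ki j) :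
    (∑ j ∈ s, X j).PosDef := by
  refine .of_dotProduct_mulVec_pos (posSemidef_sum s fun j hj => (hX j hj).1).isHermitian
    fun x hx => ?_
  obtain ⟨l, hl⟩ := Function.ne_iff.mp hx
  obtain ⟨j, hj, hlj⟩ := hcover l
  have hproj : proj K (Ki j) *ᵥ x ≠ 0 := fun h0 => hl (by
    simpa [proj_mulVec_apply, hlj] using congrFun h0 l)
  rw [star_trivial, sum_mulVec, dotProduct_sum]
  exact Finset.sum_pos' (fun m hm => by simpa using (hX m hm).1.dotProduct_mulVec_nonneg x)
    ⟨j, hj, (hX j hj).dotProduct_mulVec_pos hproj⟩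

variable [Fintype I] [DecidableEq I]

lemma posDef_sum_erase (Ki : I → Finset K)
    (hacc : ∀ k : K, 2 ≤ (Finset.univ.filter (fun i : I => k ∈ Ki i)).card)
    (X : I → Matrix K K ℝ) (hX : ∀ i, SPDOn (Ki i) (X i)) (i : I) :
    (∑ j ∈ Finset.univ.erase i, X j).PosDef := by
  refine posDef_sum_of_SPDOn_of_cover _ Ki X (fun j _ => hX j) fun l => ?_
  obtain ⟨j, hj, hji⟩ := (Finset.one_lt_card_iff_nontrivial.mp (hacc l)).exists_ne i
  exact ⟨j, Finset.mem_erase.mpr ⟨hji, Finset.mem_univ j⟩, (Finset.mem_filter.mp hj).2⟩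

lemma apply_self_lt_sum_erase_of_isFixedPt (Ki : I → Finset K)
    (hacc : ∀ k : K, 2 ≤ (Finset.univ.filter (fun i : I => k ∈ Ki i)).card)
    (B : I → Matrix K K ℝ) (hB : ∀ i, SPDOn (Ki i) (B i))
    (X : I → Matrix K K ℝ) (hX : ∀ i, SPDOn (Ki i) (X i)) {i : I}
    (hfix : X i = Fmap Ki B X i) {k : K} (hki : k ∈ Ki i) :
    X i k k < (∑ j ∈ Finset.univ.erase i, X j) k k := by
  set S := Ki i
  set Y := ∑ j ∈ Finset.univ.erase i, X j
  have hY : Y.PosDef := posDef_sum_erase Ki hacc X hX i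
  have hC : SPDOn S (invOn S (B i) + proj K S * Y⁻¹ * proj K S) :=
    (hB i).invOn.add_sandwich hY.inv.posSemidef
  have hgap : ∀ x, proj K S *ᵥ x ≠ 0 → (proj K S *ᵥ x) ⬝ᵥ (Y⁻¹ *ᵥ (proj K S *ᵥ x)) <
      x ⬝ᵥ ((invOn S (B i) + proj K S * Y⁻¹ * proj K S + proj K Sᶜ) *ᵥ x) := by
    intro x hx
    have hBx := (hB i).invOn.dotProduct_mulVec_pos hx
    have hproj : 0 ≤ x ⬝ᵥ (proj K Sᶜ *ᵥ x) := by
      simpa using (posSemidef_proj Sᶜ).dotProduct_mulVec_nonneg x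
    rw [add_mulVec, add_mulVec, dotProduct_add, dotProduct_add,
      (isSymm_proj S).dotProduct_mul_mul_mulVec]
    linarith
  have hek : proj K S *ᵥ Pi.single k 1 = Pi.single k 1 := proj_mulVec_eq_self fun l hl => by
    rw [Pi.single_apply, if_neg (ne_of_mem_of_not_mem hki hl).symm]
  rw [apply_self_eq_dotProduct_mulVec (X i), apply_self_eq_dotProduct_mulVec Y, hfix, Fmap,
    invOn, (isSymm_proj S).dotProduct_mul_mul_mulVec, hek]
  exact hC.posDef_add_proj_compl.dotProduct_inv_mulVec_lt hY (isSymm_proj S) hgap hek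
    (Pi.single_ne_zero_iff.mpr one_ne_zero)

lemma sum_erase_apply_self_eq_of_accessors_eq_pair (Ki : I → Finset K)
    (X : I → Matrix K K ℝ) (hX : ∀ i, SPDOn (Ki i) (X i)) {k : K} {i j : I} (hij : i ≠ j)
    (hpair : Finset.univ.filter (fun m : I => k ∈ Ki m) = {i, j}) :
    (∑ m ∈ Finset.univ.erase i, X m) k k = X j k k := by
  rw [Matrix.sum_apply]
  refine Finset.sum_eq_single_of_mem j (Finset.mem_erase.mpr ⟨hij.symm, Finset.mem_univ j⟩)
    fun m hm hmj => (hX m).apply_eq_zero_of_notMem (fun hkm => ?_) k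
  have hm' : m ∈ ({i, j} : Finset I) := hpair ▸ Finset.mem_filter.mpr ⟨Finset.mem_univ m, hkm⟩
  rcases Finset.mem_insert.mp hm' with rfl | hmj'
  · exact (Finset.mem_erase.mp hm).1 rfl
  · exact hmj (Finset.mem_singleton.mp hmj')

end Market

/-- If some security is accessible to exactly two traders, there is no Nash equilibrium,
i.e. no fixed point of the best-response map with each component in `S_≻^{H_i}`. -/
theorem stmt_4 {I K : Type*} [Fintype I] [DecidableEq I] [Fintype K] [DecidableEq K]
    (Ki : I → Finset K)
    (hacc : ∀ k : K, 2 ≤ (Finset.univ.filter (fun i : I => k ∈ Ki i)).card)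
    (B : I → Matrix K K ℝ) (hB : ∀ i, SPDOn (Ki i) (B i))
    (k : K) (hk : (Finset.univ.filter (fun i : I => k ∈ Ki i)).card = 2) :
    ¬ ∃ X : I → Matrix K K ℝ,
        (∀ i, SPDOn (Ki i) (X i)) ∧ (∀ i, X i = Fmap Ki B X i) := by
  rintro ⟨X, hX, hfix⟩
  obtain ⟨i, j, hij, hpair⟩ := Finset.card_eq_two.mp hk
  have hmem : ∀ m ∈ ({i, j} : Finset I), k ∈ Ki m := fun m hm => by
    rw [← hpair, Finset.mem_filter] at hm
    exact hm.2
  have hi := apply_self_lt_sum_erase_of_isFixedPt Ki hacc B hB X hX (hfix i) (hmem i (by simp))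
  have hj := apply_self_lt_sum_erase_of_isFixedPt Ki hacc B hB X hX (hfix j) (hmem j (by simp))
  rw [sum_erase_apply_self_eq_of_accessors_eq_pair Ki X hX hij hpair] at hi
  rw [sum_erase_apply_self_eq_of_accessors_eq_pair Ki X hX hij.symm
    (hpair.trans (Finset.pair_comm i j))] at hj
  exact lt_asymm hi hj
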